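/- The subshift of the Chacon substitution σ_C : 1 ↦ 1123, 2 ↦ 23, 3 ↦ 123 is not balanced on any letter. -/

import Mathlib

open Filter Topology MeasureTheory

namespace Balance

variable {A : Type*}

/-- number of (possibly overlapping) occurrences of `v` as a factor of `w` -/
def occ [DecidableEq A] (v w : List A) : ℕ :=
  ((List.range (w.length + 1)).filter (fun i => v <+: w.drop i)).length

/-- the factor of the bi-infinite word `u` starting at position `i`, of length `n` -/
def factorAt (u : ℤ → A) (i : ℤ) (n : ℕ) : List A :=
  (List.range n).map (fun k => u (i + k))

/-- `w` is a factor of the bi-infinite word `u` -/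
def IsFactor (u : ℤ → A) (w : List A) : Prop :=
  ∃ i : ℤ, w = factorAt u i w.length

/-- the bi-infinite word `u` is balanced on the word `v` -/
def BalancedOn [DecidableEq A] (u : ℤ → A) (v : List A) : Prop :=
  ∃ C : ℕ, ∀ w w' : List A, IsFactor u w → IsFactor u w' → w.length = w'.length →
    ((occ v w : ℤ) - (occ v w' : ℤ)).natAbs ≤ C

/-- the shift map on bi-infinite words -/
def shift (x : ℤ → A) : ℤ → A := fun n => x (n + 1)

/-- cylinder of points spelling `v` at coordinates `0,…,|v|-1` -/
def Cyl (v : List A) : Set (ℤ → A) := {x | factorAt x 0 v.length = v}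

/-- the language of a set of bi-infinite words -/
def Lang (X : Set (ℤ → A)) : Set (List A) := {w | ∃ x ∈ X, IsFactor x w}

/-- a subshift is balanced on the word `v` -/
def SubshiftBalancedOn [DecidableEq A] (X : Set (ℤ → A)) (v : List A) : Prop :=
  ∃ C : ℕ, ∀ w w' : List A, w ∈ Lang X → w' ∈ Lang X → w.length = w'.length →
    ((occ v w : ℤ) - (occ v w' : ℤ)).natAbs ≤ C

/-- a subshift: a nonempty closed shift-invariant set of bi-infinite words -/
structure IsSubshift [TopologicalSpace A] (X : Set (ℤ → A)) : Prop where
  nonempty : X.Nonempty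
  closed : IsClosed X
  inv : shift '' X = X

/-- a minimal subshift -/
def IsMinimalSubshift [TopologicalSpace A] (X : Set (ℤ → A)) : Prop :=
  IsSubshift X ∧
    ∀ Y : Set (ℤ → A), Y ⊆ X → IsClosed Y → shift '' Y = Y → Y.Nonempty → Y = X

/-- a substitution applied to a finite word -/
def substW (σ : A → List A) (w : List A) : List A := w.flatMap σ

/-- iterates `σ^n` applied to a finite word -/
def substIter (σ : A → List A) (n : ℕ) (w : List A) : List A := (substW σ)^[n] w

/-- a primitive (non-erasing) substitution -/
def IsPrimitive (σ : A → List A) : Prop :=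
  (∀ a, σ a ≠ []) ∧ ∃ n : ℕ, ∀ a b : A, a ∈ substIter σ n [b]

/-- the subshift generated by the substitution `σ` -/
def Xsub (σ : A → List A) : Set (ℤ → A) :=
  {x | ∀ w : List A, IsFactor x w → ∃ (a : A) (n : ℕ), w <:+: substIter σ n [a]}

/-- a substitution applied to a bi-infinite word (the image of position 0 starts at 0) -/
def substPoint [Inhabited A] (σ : A → List A) (x : ℤ → A) : ℤ → A := fun n =>
  if 0 ≤ n then
    (substW σ ((List.range (n.toNat + 1)).map (fun i => x (i : ℤ)))).getD n.toNat default
  else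
    (((List.range ((-n - 1).toNat + 1)).map (fun i => x (-(i : ℤ) - 1))).flatMap
      (fun a => (σ a).reverse)).getD (-n - 1).toNat default

end Balance

namespace Balance

/-- the Chacon substitution `1 ↦ 1123`, `2 ↦ 23`, `3 ↦ 123` on the alphabet `Fin 3` -/
def sigmaC : Fin 3 → List (Fin 3) := ![[0, 0, 1, 2], [1, 2], [0, 1, 2]]

section Aux

variable {A : Type*}

theorem substW_append (σ : A → List A) (u v : List A) :
    substW σ (u ++ v) = substW σ u ++ substW σ v := List.flatMap_append

theorem substIter_succ (σ : A → List A) (n : ℕ) (w : List A) :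
    substIter σ (n+1) w = substIter σ n (substW σ w) :=
  Function.iterate_succ_apply _ n w

theorem substIter_succ' (σ : A → List A) (n : ℕ) (w : List A) :
    substIter σ (n+1) w = substW σ (substIter σ n w) :=
  Function.iterate_succ_apply' _ n w

theorem substIter_add (σ : A → List A) (m n : ℕ) (w : List A) :
    substIter σ (m+n) w = substIter σ m (substIter σ n w) :=
  Function.iterate_add_apply _ m n w

theorem substIter_append (σ : A → List A) (n : ℕ) :
    ∀ u v : List A, substIter σ n (u ++ v) = substIter σ n u ++ substIter σ n v := by
  induction n with
  | zero => intro u v; rfl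
  | succ n ih =>
    intro u v
    rw [substIter_succ', substIter_succ', substIter_succ', ih, substW_append]

theorem substIter_infix (σ : A → List A) (n : ℕ) {u v : List A} (h : u <:+: v) :
    substIter σ n u <:+: substIter σ n v := by
  obtain ⟨s, t, rfl⟩ := h
  rw [substIter_append, substIter_append]
  exact ⟨substIter σ n s, substIter σ n t, rfl⟩

theorem factorAt_eq (u : ℤ → A) (i : ℤ) (n : ℕ) :
    factorAt u i n = (List.range n).map (fun k : ℕ => u (i + k)) := by
  unfold factorAt
  rw [bind_pure_comp]
  show List.map (fun k => u (i + k)) (List.map Nat.cast (List.range n)) = _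
  rw [List.map_map]
  rfl

theorem factorAt_length (u : ℤ → A) (i : ℤ) (n : ℕ) : (factorAt u i n).length = n := by
  rw [factorAt_eq]; simp

theorem factorAt_add (u : ℤ → A) (i : ℤ) (m n : ℕ) :
    factorAt u i (m+n) = factorAt u i m ++ factorAt u (i+m) n := by
  rw [factorAt_eq, factorAt_eq, factorAt_eq, List.range_add, List.map_append, List.map_map]
  congr 1
  apply List.map_congr_left
  intro k _
  simp only [Function.comp_apply]
  congr 1
  push_cast
  ring

theorem factorAt_getElem (u : ℤ → A) (i : ℤ) (n : ℕ) (j : ℕ) (h : j < (factorAt u i n).length) :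
    (factorAt u i n)[j] = u (i + j) := by
  have hj : j < n := by rw [factorAt_length] at h; exact h
  simp [factorAt_eq]

end Aux

open List

private abbrev F3 := Fin 3

/-- `σ_C^n(1)` -/
def Aw (n : ℕ) : List F3 := substIter sigmaC n [0]
/-- `σ_C^n(2)` -/
def Bw (n : ℕ) : List F3 := substIter sigmaC n [1]
/-- `σ_C^n(3)` -/
def Cw (n : ℕ) : List F3 := substIter sigmaC n [2]

theorem Aw_succ (n : ℕ) : Aw (n+1) = Aw n ++ Aw n ++ Bw n ++ Cw n := by
  have h : substW sigmaC [(0 : F3)] = [0] ++ [0] ++ [1] ++ [2] := by decide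
  rw [Aw, substIter_succ, h, substIter_append, substIter_append, substIter_append]
  rfl

theorem Bw_succ (n : ℕ) : Bw (n+1) = Bw n ++ Cw n := by
  have h : substW sigmaC [(1 : F3)] = [1] ++ [2] := by decide
  rw [Bw, substIter_succ, h, substIter_append]
  rfl

theorem Cw_succ (n : ℕ) : Cw (n+1) = Aw n ++ Bw n ++ Cw n := by
  have h : substW sigmaC [(2 : F3)] = [0] ++ [1] ++ [2] := by decide
  rw [Cw, substIter_succ, h, substIter_append, substIter_append]
  rfl

theorem lbc : ∀ n : ℕ, (Bw (n+1)).length + (Cw (n+1)).length = (Aw (n+1)).length + 1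
  | 0 => by decide
  | n+1 => by
    have ih := lbc n
    rw [Aw_succ (n+1), Bw_succ (n+1), Cw_succ (n+1)]
    simp only [List.length_append]
    omega

theorem cbc : ∀ n : ℕ, (Aw (n+1)).count 0 = (Bw (n+1)).count 0 + (Cw (n+1)).count 0 + 1
  | 0 => by decide
  | n+1 => by
    have ih := cbc n
    rw [Aw_succ (n+1), Bw_succ (n+1), Cw_succ (n+1)]
    simp only [List.count_append]
    omega

theorem lens : ∀ n : ℕ, n + 1 ≤ (Aw n).length ∧ 1 ≤ (Bw n).length ∧ n + 1 ≤ (Cw n).length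
  | 0 => by decide
  | n+1 => by
    have ih := lens n
    rw [Aw_succ, Bw_succ, Cw_succ]
    simp only [List.length_append]
    omega

/-- the heavy words `R_k = A_k ++ R_{k-1}` -/
def Rw : ℕ → List F3
  | 0 => [0, 0]
  | k+1 => Aw (k+1) ++ Rw k

theorem Rw_prefix : ∀ k : ℕ, Rw k <+: Aw (k+1)
  | 0 => by decide
  | k+1 => by
    obtain ⟨t, ht⟩ := Rw_prefix k
    refine ⟨t ++ Bw (k+1) ++ Cw (k+1), ?_⟩
    show (Aw (k+1) ++ Rw k) ++ (t ++ Bw (k+1) ++ Cw (k+1)) = Aw (k+1+1)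
    rw [Aw_succ (k+1), ← ht]
    simp [List.append_assoc]

theorem len_AR : ∀ k : ℕ, (Aw (k+1)).length = 2 * (Rw k).length + k
  | 0 => by decide
  | k+1 => by
    have ih := len_AR k
    have h2 := lbc k
    have hR : Rw (k+1) = Aw (k+1) ++ Rw k := rfl
    rw [Aw_succ (k+1), hR]
    simp only [List.length_append]
    omega

theorem cnt_AR : ∀ k : ℕ, 2 * (Rw k).count 0 = (Aw (k+1)).count 0 + (k + 2)
  | 0 => by decide
  | k+1 => by
    have ih := cnt_AR k
    have h2 := cbc k
    have hR : Rw (k+1) = Aw (k+1) ++ Rw k := rfl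
    rw [Aw_succ (k+1), hR]
    simp only [List.count_append]
    omega

theorem Aw_prefix_succ (n : ℕ) : Aw n <+: Aw (n+1) := by
  refine ⟨Aw n ++ Bw n ++ Cw n, ?_⟩
  rw [Aw_succ]
  simp [List.append_assoc]

theorem Aw_prefix {m m' : ℕ} (h : m ≤ m') : Aw m <+: Aw m' := by
  induction m', h using Nat.le_induction with
  | base => exact List.prefix_rfl
  | succ n hn ih => exact ih.trans (Aw_prefix_succ n)

theorem Cw_suffix_succ (n : ℕ) : Cw n <:+ Cw (n+1) := by
  refine ⟨Aw n ++ Bw n, ?_⟩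
  rw [Cw_succ]

theorem Cw_suffix {m m' : ℕ} (h : m ≤ m') : Cw m <:+ Cw m' := by
  induction m', h using Nat.le_induction with
  | base => exact List.suffix_rfl
  | succ n hn ih => exact ih.trans (Cw_suffix_succ n)

/-- the bi-infinite fixed point of the Chacon substitution -/
noncomputable def xpt : ℤ → F3 := fun n =>
  if 0 ≤ n then (Aw (n.toNat + 1)).getD n.toNat 0
  else (Cw (-n).toNat).reverse.getD ((-n).toNat - 1) 0

theorem getD_prefix {l l' : List F3} (h : l <+: l') {k : ℕ} (hk : k < l.length) :
    l'.getD k 0 = l.getD k 0 := by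
  rw [List.getD_eq_getElem l 0 hk, List.getD_eq_getElem l' 0 (hk.trans_le h.length_le),
    h.getElem hk]

theorem xpt_nonneg (m : ℕ) (i : ℤ) (h0 : 0 ≤ i) (hk : i.toNat < (Aw m).length) :
    xpt i = (Aw m).getD i.toNat 0 := by
  rw [xpt, if_pos h0]
  have h1 : i.toNat < (Aw (i.toNat + 1)).length := by
    have := (lens (i.toNat + 1)).1
    omega
  rcases le_total (i.toNat + 1) m with h | h
  · rw [getD_prefix (Aw_prefix h) h1]
  · rw [getD_prefix (Aw_prefix h) hk]

theorem xpt_neg (m : ℕ) (i : ℤ) (h0 : i < 0) (hk : (-i).toNat ≤ (Cw m).length) :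
    xpt i = (Cw m).reverse.getD ((-i).toNat - 1) 0 := by
  rw [xpt, if_neg (by omega)]
  set p := (-i).toNat with hp
  have hp1 : 1 ≤ p := by omega
  have h1 : p - 1 < (Cw p).reverse.length := by
    have := (lens p).2.2
    simp only [List.length_reverse]
    omega
  have h2 : p - 1 < (Cw m).reverse.length := by
    simp only [List.length_reverse]
    omega
  rcases le_total p m with h | h
  · rw [getD_prefix ((Cw_suffix h).reverse) h1]
  · rw [getD_prefix ((Cw_suffix h).reverse) h2]

theorem factorAt_Aw (m : ℕ) : factorAt xpt 0 ((Aw m).length) = Aw m := by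
  apply List.ext_getElem (by simp [factorAt_length])
  intro j h1 h2
  rw [factorAt_getElem]
  rw [xpt_nonneg m (0 + j) (by positivity) (by simpa using h2)]
  have : ((0 : ℤ) + (j : ℤ)).toNat = j := by omega
  rw [this]
  exact List.getD_eq_getElem _ _ h2

theorem factorAt_Cw (m : ℕ) :
    factorAt xpt (-((Cw m).length : ℤ)) ((Cw m).length) = Cw m := by
  apply List.ext_getElem (by simp [factorAt_length])
  intro j h1 h2
  rw [factorAt_getElem]
  set L := (Cw m).length with hL
  have hneg : (-(L:ℤ) + j) < 0 := by omega
  have htn : (-(-(L:ℤ) + j)).toNat = L - j := by omega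
  rw [xpt_neg m _ hneg (by omega)]
  rw [htn]
  have h3 : L - j - 1 < (Cw m).reverse.length := by simp; omega
  rw [List.getD_eq_getElem _ _ h3, List.getElem_reverse]
  congr 1
  omega

theorem window (m : ℕ) :
    factorAt xpt (-((Cw m).length : ℤ)) ((Cw m).length + (Aw m).length) = Cw m ++ Aw m := by
  rw [factorAt_add, factorAt_Cw]
  congr 1
  have : (-((Cw m).length : ℤ) + (Cw m).length) = 0 := by ring
  rw [this, factorAt_Aw]

theorem CA_infix (m : ℕ) : Cw m ++ Aw m <:+: Aw (m+2) := by
  have h20 : ([2, 0] : List F3) <:+: Aw 2 := by decide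
  have h := substIter_infix sigmaC m h20
  have e1 : substIter sigmaC m [2, 0] = Cw m ++ Aw m := by
    have : ([2, 0] : List F3) = [2] ++ [0] := rfl
    rw [this, substIter_append]; rfl
  have e2 : substIter sigmaC m (Aw 2) = Aw (m+2) := by
    rw [Aw, ← substIter_add]
    rfl
  rwa [e1, e2] at h

theorem isFactor_of_infix_factorAt {u : ℤ → F3} {w : List F3} {i : ℤ} {N : ℕ}
    (h : w <:+: factorAt u i N) : IsFactor u w := by
  obtain ⟨s, t, hst⟩ := h
  have hN : N = s.length + (w.length + t.length) := by
    have := congrArg List.length hst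
    simp only [List.length_append, factorAt_length] at this
    omega
  rw [hN, factorAt_add, factorAt_add] at hst
  rw [List.append_assoc] at hst
  obtain ⟨-, h2⟩ := List.append_inj hst (by rw [factorAt_length])
  obtain ⟨h3, -⟩ := List.append_inj h2 (by rw [factorAt_length])
  exact ⟨i + s.length, h3⟩

theorem xpt_mem : xpt ∈ Xsub sigmaC := by
  rintro w ⟨i, hw⟩
  set n := w.length with hn
  set m := i.natAbs + n + 1 with hm
  refine ⟨0, m + 2, ?_⟩
  have hCm : m + 1 ≤ (Cw m).length := (lens m).2.2
  have hAm : m + 1 ≤ (Aw m).length := (lens m).1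
  set L := (Cw m).length with hL
  have hd1 : 0 ≤ i + (L : ℤ) := by
    have : (i.natAbs : ℤ) ≤ L := by omega
    omega
  set d1 := (i + (L : ℤ)).toNat with hd1'
  have hid : (d1 : ℤ) = i + L := by omega
  have hub : d1 + n ≤ L + (Aw m).length := by
    have h1 : (i : ℤ) ≤ i.natAbs := Int.le_natAbs
    omega
  set d2 := L + (Aw m).length - (d1 + n) with hd2
  have hsplit : L + (Aw m).length = d1 + (n + d2) := by omega
  have hwin := window m
  rw [hsplit, factorAt_add, factorAt_add] at hwin
  have hi : -(L : ℤ) + d1 = i := by omega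
  rw [hi] at hwin
  have hinf : w <:+: Cw m ++ Aw m := by
    rw [← hwin, ← hw]
    exact ⟨factorAt xpt (-(L:ℤ)) d1, factorAt xpt (i + n) d2, by rw [List.append_assoc]⟩
  have := hinf.trans (CA_infix m)
  have e2 : substIter sigmaC (m+2) [0] = Aw (m+2) := rfl
  rwa [e2]

theorem mem_Lang {w : List F3} (m : ℕ) (h : w <:+: Aw m) : w ∈ Lang (Xsub sigmaC) := by
  refine ⟨xpt, xpt_mem, ?_⟩
  apply isFactor_of_infix_factorAt (u := xpt) (i := 0) (N := (Aw m).length)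
  rwa [factorAt_Aw]

theorem occ_cons (a b : F3) (w : List F3) :
    occ [a] (b :: w) = occ [a] w + if b = a then 1 else 0 := by
  rw [occ, occ, List.length_cons, List.range_succ_eq_map, List.filter_cons, List.filter_map]
  have hcomp : ((fun i => decide ([a] <+: (b :: w).drop i)) ∘ Nat.succ)
      = fun i => decide ([a] <+: w.drop i) := rfl
  rw [hcomp]
  have hpre : ([a] <+: (b :: w).drop 0) ↔ b = a := by
    simp [List.cons_prefix_cons, eq_comm]
  by_cases hb : b = a
  · rw [if_pos (by simpa using hpre.mpr hb), if_pos hb]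
    simp
  · rw [if_neg (by simpa using fun h => hb (hpre.mp h)), if_neg hb]
    simp

theorem occ_singleton (a : F3) : ∀ w : List F3, occ [a] w = w.count a
  | [] => by simp [occ]
  | b :: w => by
    rw [occ_cons, occ_singleton a w, List.count_cons]
    simp [beq_iff_eq]

/-- letters `2` and `3` alternate in images of the substitution -/
theorem filter_sigma (c : F3) : (sigmaC c).filter (fun d => decide (d ≠ 0)) = [1, 2] := by
  fin_cases c <;> decide

theorem chain_filter : ∀ w : List F3,
    ((substW sigmaC w).filter (fun d => decide (d ≠ 0))).Chain' (· ≠ ·) ∧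
    (∀ y ∈ ((substW sigmaC w).filter (fun d => decide (d ≠ 0))).head?, y = (1 : F3)) := by
  intro w
  induction w with
  | nil => simp [substW]; exact List.isChain_nil
  | cons c w ih =>
    have hc : substW sigmaC (c :: w) = sigmaC c ++ substW sigmaC w := rfl
    rw [hc, List.filter_append, filter_sigma]
    constructor
    · apply List.isChain_append.mpr
      refine ⟨List.isChain_pair.mpr (by decide), ih.1, ?_⟩
      intro x hx y hy
      have hx' : x = (2 : F3) := by simpa using hx.symm
      have hy' : y = (1 : F3) := ih.2 y hy
      rw [hx', hy']
      decide
    · intro y hy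
      exact (by simpa using hy : (1 : F3) = y).symm

theorem alt_count : ∀ l : List F3, (∀ c ∈ l, c ≠ 0) → l.Chain' (· ≠ ·) →
    ((l.count 1 : ℤ) - l.count 2).natAbs ≤ 1
  | [] => by intro _ _; simp
  | [c] => by
    intro h _
    have hc := h c (by simp)
    fin_cases c <;> simp_all
  | c :: d :: t => by
    intro hm hc
    have hcd : c ≠ d := (List.isChain_cons_cons.mp hc).1
    have hct : t.Chain' (· ≠ ·) := ((List.isChain_cons_cons.mp hc).2).tail
    have ht := alt_count t (fun e he => hm e (by simp [he])) hct
    have hc0 := hm c (by simp)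
    have hd0 := hm d (by simp)
    have hcount : (c :: d :: t).count 1 = t.count 1 + 1 ∧
        (c :: d :: t).count 2 = t.count 2 + 1 := by
      fin_cases c <;> fin_cases d <;> simp_all [List.count_cons]
    omega

theorem count12_bound {w : List F3} {m : ℕ} (h : w <:+: Aw (m+1)) :
    ((w.count 1 : ℤ) - w.count 2).natAbs ≤ 1 := by
  have hA : Aw (m+1) = substW sigmaC (Aw m) := substIter_succ' _ _ _
  rw [hA] at h
  have h2 := List.IsInfix.filter (fun d => decide (d ≠ 0)) h
  have hch := (chain_filter (Aw m)).1.infix h2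
  have hmem : ∀ c ∈ w.filter (fun d => decide (d ≠ 0)), c ≠ (0 : F3) := by
    intro c hcmem
    simpa using (List.mem_filter.mp hcmem).2
  have hb := alt_count _ hmem hch
  have h1 : (w.filter (fun d => decide (d ≠ 0))).count 1 = w.count 1 :=
    List.count_filter (by decide)
  have h2' : (w.filter (fun d => decide (d ≠ 0))).count 2 = w.count 2 :=
    List.count_filter (by decide)
  rwa [h1, h2'] at hb

theorem count_sum (w : List F3) : w.count 0 + w.count 1 + w.count 2 = w.length := by
  induction w with
  | nil => rfl
  | cons c w ih =>
    rw [List.length_cons]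
    fin_cases c <;> simp_all [List.count_cons] <;> omega

theorem main_theorem (a : Fin 3) : ¬ SubshiftBalancedOn (Xsub sigmaC) [a] := by
  rintro ⟨C, hC⟩
  set k := 2 * C + 2 with hk
  set u := Rw k with hu
  set nn := u.length with hnn
  set v := ((Aw (k+1)).drop nn).take nn with hv
  have hpre : Rw k <+: Aw (k+1) := Rw_prefix k
  have hlenA : (Aw (k+1)).length = 2 * nn + k := len_AR k
  have hu_inf : u <:+: Aw (k+1) := hpre.isInfix
  have hv_inf : v <:+: Aw (k+1) := by
    refine ⟨(Aw (k+1)).take nn, (Aw (k+1)).drop (nn + nn), ?_⟩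
    have h1 : v ++ (Aw (k+1)).drop (nn + nn) = (Aw (k+1)).drop nn := by
      rw [hv, ← List.drop_drop]
      exact List.take_append_drop _ _
    rw [List.append_assoc, h1, List.take_append_drop]
  have hu_lang : u ∈ Lang (Xsub sigmaC) := mem_Lang (k+1) hu_inf
  have hv_lang : v ∈ Lang (Xsub sigmaC) := mem_Lang (k+1) hv_inf
  have hlen_v : v.length = nn := by
    rw [hv, List.length_take, List.length_drop]
    omega
  have hlen_uv : u.length = v.length := by omega
  have htake : (Aw (k+1)).take nn = u := (List.prefix_iff_eq_take.mp hpre).symm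
  have hsplit : u.count 0 + ((Aw (k+1)).drop nn).count 0 = (Aw (k+1)).count 0 := by
    conv_rhs => rw [← List.take_append_drop nn (Aw (k+1))]
    rw [List.count_append, htake]
  have hvle : v.count 0 ≤ ((Aw (k+1)).drop nn).count 0 :=
    (List.take_sublist _ _).count_le 0
  have hcnt : 2 * u.count 0 = (Aw (k+1)).count 0 + (k + 2) := cnt_AR k
  have hb_u := count12_bound (m := k) hu_inf
  have hb_v := count12_bound (m := k) hv_inf
  have hsum_u := count_sum u
  have hsum_v := count_sum v
  have h1 := hC u v hu_lang hv_lang hlen_uv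
  rw [occ_singleton, occ_singleton] at h1
  have ha : a = 0 ∨ a = 1 ∨ a = 2 := by fin_cases a <;> decide
  rcases ha with rfl | rfl | rfl <;> omega

/-- The Chacon subshift is not balanced on any letter. -/
theorem chacon_unbalanced (a : Fin 3) : ¬ SubshiftBalancedOn (Xsub sigmaC) [a] := by
  exact main_theorem a

end Balance
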